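/- Let a > 0 satisfy b < a². Then there exists τ₀ > 0 (depending only on α, β, γ, a) such that for every 0 < τ ≤ τ₀ the following discrete maximum bound principle holds: if Q : ℕ → (real 3×3 matrices) satisfies the explicit recursion Q_{m+1} = Q_m + τ·f(Q_m) for all m, and Q₀ is symmetric and traceless with ‖Q₀‖_F ≤ a, then for every m ≥ 0 the matrix Q_m is symmetric and traceless and ‖Q_m‖_F ≤ a. -/

import Mathlib

/-! Write `q = ‖Q‖` for a symmetric traceless `Q` with `q ≤ a`. Expanding the square,
`‖Q + τ f(Q)‖² = q² + 2τ ⟪Q, f(Q)⟫ + τ² ‖f(Q)‖²`, and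
`⟪Q, f(Q)⟫ = -α q² + β tr Q³ - γ q⁴ ≤ -δ q² + γ a² (a² - q²)` with `δ = α + γ a² - |β| a`,
which is positive because `b < a²`. Once `4τγa² ≤ 1` the second term costs at most
half the gap `a² - q²`, and the `O(τ²)` remainder is paid for by that gap when `q` is small and
by `2τδq²` when `q` is close to `a`. Since `f` preserves symmetry and tracelessness, the bound
propagates along the scheme by induction. -/

open Matrix

attribute [local instance] Matrix.frobeniusNormedAddCommGroup Matrix.frobeniusNormedSpace

/-- The Q-tensor bulk nonlinearity:
`f(Q) = −α·Q + β·(Q² − (1/3)·trace(Q²)·I) − γ·trace(Q²)·Q`. -/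
noncomputable def fQ (α β γ : ℝ) (Q : Matrix (Fin 3) (Fin 3) ℝ) : Matrix (Fin 3) (Fin 3) ℝ :=
  -(α • Q) + β • (Q * Q - ((Matrix.trace (Q * Q)) / 3) • (1 : Matrix (Fin 3) (Fin 3) ℝ))
    - (γ * Matrix.trace (Q * Q)) • Q

/-- The Frobenius norm `‖A‖_F = (trace(Aᵀ A))^{1/2}`. -/
noncomputable def frobNorm (A : Matrix (Fin 3) (Fin 3) ℝ) : ℝ :=
  Real.sqrt (Matrix.trace (Aᵀ * A))

open Topology

namespace Matrix

variable {m n : Type*} [Fintype m] [Fintype n]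

/-- The Frobenius norm is by construction the `L²` norm of the `L²` norms of the rows, so this
embedding turns `trace (Aᵀ * B)` into an inner product. -/
def frobeniusToL2 (A : Matrix m n ℝ) : WithLp 2 (m → WithLp 2 (n → ℝ)) :=
  WithLp.toLp 2 fun i => WithLp.toLp 2 (A i)

theorem trace_transpose_mul_eq_inner_frobeniusToL2 (A B : Matrix m n ℝ) :
    trace (Aᵀ * B) = inner ℝ (frobeniusToL2 A) (frobeniusToL2 B) := by
  simp only [frobeniusToL2, trace, diag, mul_apply, transpose_apply, PiLp.inner_apply,
    RCLike.inner_apply, conj_trivial]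
  rw [Finset.sum_comm]
  simp only [mul_comm]

theorem frobenius_norm_sq_eq_trace (A : Matrix m n ℝ) : ‖A‖ ^ 2 = trace (Aᵀ * A) := by
  rw [trace_transpose_mul_eq_inner_frobeniusToL2, real_inner_self_eq_norm_sq]
  rfl

theorem abs_trace_transpose_mul_le (A B : Matrix m n ℝ) : |trace (Aᵀ * B)| ≤ ‖A‖ * ‖B‖ := by
  rw [trace_transpose_mul_eq_inner_frobeniusToL2]
  exact abs_real_inner_le_norm _ _

theorem frobenius_norm_add_sq (A B : Matrix m n ℝ) :
    ‖A + B‖ ^ 2 = ‖A‖ ^ 2 + 2 * trace (Aᵀ * B) + ‖B‖ ^ 2 := by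
  rw [trace_transpose_mul_eq_inner_frobeniusToL2]
  exact norm_add_sq_real (frobeniusToL2 A) (frobeniusToL2 B)

theorem abs_trace_mul_self_le (A : Matrix n n ℝ) : |trace (A * A)| ≤ ‖A‖ ^ 2 := by
  simpa [frobenius_norm_transpose, sq] using abs_trace_transpose_mul_le Aᵀ A

theorem abs_trace_transpose_mul_mul_self_le (A : Matrix n n ℝ) :
    |trace (Aᵀ * (A * A))| ≤ ‖A‖ ^ 3 :=
  calc |trace (Aᵀ * (A * A))| ≤ ‖A‖ * ‖A * A‖ := abs_trace_transpose_mul_le _ _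
    _ ≤ ‖A‖ * (‖A‖ * ‖A‖) := by gcongr; exact frobenius_norm_mul A A
    _ = ‖A‖ ^ 3 := by ring

end Matrix

lemma frobNorm_eq_norm (A : Matrix (Fin 3) (Fin 3) ℝ) : frobNorm A = ‖A‖ := by
  rw [frobNorm, ← frobenius_norm_sq_eq_trace, Real.sqrt_sq (norm_nonneg A)]

section fQ

variable {α β γ : ℝ} {Q : Matrix (Fin 3) (Fin 3) ℝ}

lemma transpose_fQ (hQ : Qᵀ = Q) : (fQ α β γ Q)ᵀ = fQ α β γ Q := by
  simp only [fQ, transpose_add, transpose_sub, transpose_smul, transpose_neg, transpose_mul,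
    transpose_one, hQ]

lemma trace_fQ (hQ : trace Q = 0) : trace (fQ α β γ Q) = 0 := by
  simp only [fQ, trace_add, trace_sub, trace_smul, trace_neg, trace_one, hQ, smul_eq_mul,
    Fintype.card_fin]
  ring

lemma trace_transpose_mul_fQ (hQ : Qᵀ = Q) (htr : trace Q = 0) :
    trace (Qᵀ * fQ α β γ Q) =
      -(α * ‖Q‖ ^ 2) + β * trace (Qᵀ * (Q * Q)) - γ * ‖Q‖ ^ 2 * ‖Q‖ ^ 2 := by
  have hsq : trace (Q * Q) = ‖Q‖ ^ 2 := by rw [frobenius_norm_sq_eq_trace, hQ]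
  simp only [fQ, Matrix.mul_add, Matrix.mul_sub, Matrix.mul_neg, Matrix.mul_smul, trace_add,
    trace_sub, trace_neg, trace_smul, Matrix.mul_one, smul_eq_mul, hQ, htr, hsq]
  ring

/-- The cubic term is absorbed through `γ (a² - q²)² + |β| q² (a - q) ≥ 0` for `0 ≤ q ≤ a`. -/
lemma trace_transpose_mul_fQ_le {a : ℝ} (hγ : 0 ≤ γ) (hQ : Qᵀ = Q) (htr : trace Q = 0)
    (hQa : ‖Q‖ ≤ a) :
    trace (Qᵀ * fQ α β γ Q) ≤
      -((α + γ * a ^ 2 - |β| * a) * ‖Q‖ ^ 2) + γ * a ^ 2 * (a ^ 2 - ‖Q‖ ^ 2) := by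
  have hq := norm_nonneg Q
  have hcubic : β * trace (Qᵀ * (Q * Q)) ≤ |β| * ‖Q‖ ^ 3 :=
    (le_abs_self _).trans <| by
      rw [abs_mul]
      exact mul_le_mul_of_nonneg_left (abs_trace_transpose_mul_mul_self_le Q) (abs_nonneg β)
  have h₁ : 0 ≤ γ * (a ^ 2 - ‖Q‖ ^ 2) ^ 2 := by positivity
  have h₂ : 0 ≤ |β| * ‖Q‖ ^ 2 * (a - ‖Q‖) := mul_nonneg (by positivity) (sub_nonneg.mpr hQa)
  rw [trace_transpose_mul_fQ hQ htr]
  nlinarith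

lemma norm_fQ_le {a : ℝ} (hγ : 0 ≤ γ) (hQa : ‖Q‖ ≤ a) :
    ‖fQ α β γ Q‖ ≤ |α| * a + 2 * |β| * a ^ 2 + γ * a ^ 3 := by
  set t := trace (Q * Q)
  have hq := norm_nonneg Q
  have ht : |t| ≤ a ^ 2 := (abs_trace_mul_self_le Q).trans (by gcongr)
  have hQQ : ‖Q * Q‖ ≤ a ^ 2 :=
    (frobenius_norm_mul Q Q).trans (by rw [sq]; exact mul_le_mul hQa hQa hq (hq.trans hQa))
  have hone : ‖(1 : Matrix (Fin 3) (Fin 3) ℝ)‖ ≤ 3 := by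
    have h : ‖(1 : Matrix (Fin 3) (Fin 3) ℝ)‖ ^ 2 = 3 := by
      rw [frobenius_norm_sq_eq_trace]; simp
    nlinarith [norm_nonneg (1 : Matrix (Fin 3) (Fin 3) ℝ)]
  have hproj : ‖Q * Q - (t / 3) • (1 : Matrix (Fin 3) (Fin 3) ℝ)‖ ≤ 2 * a ^ 2 :=
    calc _ ≤ ‖Q * Q‖ + |t| / 3 * ‖(1 : Matrix (Fin 3) (Fin 3) ℝ)‖ :=
          (norm_sub_le _ _).trans_eq (by rw [norm_smul, Real.norm_eq_abs, abs_div]; norm_num)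
      _ ≤ a ^ 2 + a ^ 2 / 3 * 3 := by gcongr
      _ = 2 * a ^ 2 := by ring
  calc ‖fQ α β γ Q‖ ≤ |α| * ‖Q‖ + |β| * ‖Q * Q - (t / 3) • (1 : Matrix (Fin 3) (Fin 3) ℝ)‖
        + γ * |t| * ‖Q‖ := by
        refine (norm_sub_le _ _).trans (add_le_add ((norm_add_le _ _).trans_eq ?_) ?_)
        · rw [norm_neg, norm_smul, norm_smul, Real.norm_eq_abs, Real.norm_eq_abs]
        · rw [norm_smul, Real.norm_eq_abs, abs_mul, abs_of_nonneg hγ]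
    _ ≤ |α| * a + |β| * (2 * a ^ 2) + γ * a ^ 2 * a := by gcongr
    _ = |α| * a + 2 * |β| * a ^ 2 + γ * a ^ 3 := by ring

end fQ

lemma sq_add_two_mul_add_sq_le {τ γ δ a x I F M : ℝ} (ha : 0 < a) (hτ : 0 ≤ τ) (hx : 0 ≤ x)
    (hxa : x ≤ a ^ 2) (hI : I ≤ -(δ * x) + γ * a ^ 2 * (a ^ 2 - x)) (hF : F ^ 2 ≤ M ^ 2)
    (h₁ : 4 * τ * γ * a ^ 2 ≤ 1) (h₂ : 2 * (τ * M) ^ 2 ≤ a ^ 2)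
    (h₃ : τ * M ^ 2 ≤ 2 * δ * a ^ 2) :
    x + 2 * τ * I + τ ^ 2 * F ^ 2 ≤ a ^ 2 := by
  have hgap : 0 ≤ a ^ 2 - x := sub_nonneg.mpr hxa
  have hγ : 2 * τ * (γ * a ^ 2 * (a ^ 2 - x)) ≤ (a ^ 2 - x) / 2 := by
    nlinarith [mul_nonneg hgap (sub_nonneg.mpr h₁)]
  -- `x ↦ (a² - x) / 2 + 2τδx` is affine, so it suffices to beat `τ²M²` at `x = 0` and `x = a²`.
  have hM : a ^ 2 * (τ ^ 2 * F ^ 2) ≤ a ^ 2 * ((a ^ 2 - x) / 2 + 2 * τ * δ * x) := by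
    have hleft := mul_le_mul_of_nonneg_left h₂ hgap
    have hright := mul_le_mul_of_nonneg_left h₃ (mul_nonneg hx hτ)
    have hFM := mul_le_mul_of_nonneg_left hF (sq_nonneg (a * τ))
    nlinarith
  have hM' := le_of_mul_le_mul_left hM (by positivity)
  nlinarith

lemma norm_add_smul_fQ_le {α β γ a τ : ℝ} (hγ : 0 ≤ γ) (ha : 0 < a) (hτ : 0 ≤ τ)
    (h₁ : 4 * τ * γ * a ^ 2 ≤ 1)
    (h₂ : 2 * (τ * (|α| * a + 2 * |β| * a ^ 2 + γ * a ^ 3)) ^ 2 ≤ a ^ 2)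
    (h₃ : τ * (|α| * a + 2 * |β| * a ^ 2 + γ * a ^ 3) ^ 2 ≤ 2 * (α + γ * a ^ 2 - |β| * a) * a ^ 2)
    {Q : Matrix (Fin 3) (Fin 3) ℝ} (hQ : Qᵀ = Q) (htr : trace Q = 0) (hQa : ‖Q‖ ≤ a) :
    ‖Q + τ • fQ α β γ Q‖ ≤ a := by
  have hF : ‖fQ α β γ Q‖ ^ 2 ≤ (|α| * a + 2 * |β| * a ^ 2 + γ * a ^ 3) ^ 2 :=
    pow_le_pow_left₀ (norm_nonneg _) (norm_fQ_le hγ hQa) 2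
  rw [← pow_le_pow_iff_left₀ (norm_nonneg _) ha.le two_ne_zero, frobenius_norm_add_sq,
    Matrix.mul_smul, trace_smul, smul_eq_mul, norm_smul, Real.norm_eq_abs, mul_pow, sq_abs,
    ← mul_assoc]
  exact sq_add_two_mul_add_sq_le ha hτ (sq_nonneg _) (pow_le_pow_left₀ (norm_nonneg _) hQa 2)
    (trace_transpose_mul_fQ_le hγ hQ htr hQa) hF h₁ h₂ h₃

lemma abs_mul_lt_add_mul_sq {α β γ a : ℝ} (hγ : 0 < γ) (ha : 0 < a)
    (h : β ^ 2 / γ ^ 2 - 2 * α / γ < a ^ 2) : |β| * a < α + γ * a ^ 2 := by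
  have hβ : β ^ 2 < γ ^ 2 * a ^ 2 + 2 * α * γ := by
    have e : β ^ 2 / γ ^ 2 - 2 * α / γ = (β ^ 2 - 2 * α * γ) / γ ^ 2 := by field_simp
    rw [e, div_lt_iff₀ (by positivity)] at h
    linarith
  have hpos : 0 < α + γ * a ^ 2 := by nlinarith [sq_nonneg β]
  rw [← pow_lt_pow_iff_left₀ (by positivity) hpos.le two_ne_zero, mul_pow, sq_abs]
  nlinarith [sq_nonneg α, mul_pos ha ha]

/-- Discrete maximum bound principle for the explicit first-order scheme
`Q_{m+1} = Q_m + τ·f(Q_m)`. -/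
theorem stmt14 (α β γ : ℝ) (hγ : 0 < γ) (b : ℝ) (hb : b = β ^ 2 / γ ^ 2 - 2 * α / γ)
    (a : ℝ) (ha : 0 < a) (hba : b < a ^ 2) :
    ∃ τ₀ : ℝ, 0 < τ₀ ∧
      ∀ τ : ℝ, 0 < τ → τ ≤ τ₀ →
        ∀ Q : ℕ → Matrix (Fin 3) (Fin 3) ℝ,
          (∀ m : ℕ, Q (m + 1) = Q m + τ • fQ α β γ (Q m)) →
          (Q 0)ᵀ = Q 0 → Matrix.trace (Q 0) = 0 → frobNorm (Q 0) ≤ a →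
          ∀ m : ℕ, (Q m)ᵀ = Q m ∧ Matrix.trace (Q m) = 0 ∧ frobNorm (Q m) ≤ a := by
  have hδ : 0 < α + γ * a ^ 2 - |β| * a := sub_pos.mpr (abs_mul_lt_add_mul_sq hγ ha (hb ▸ hba))
  set M := |α| * a + 2 * |β| * a ^ 2 + γ * a ^ 3
  have hsmall : ∀ᶠ τ in 𝓝 0, 4 * τ * γ * a ^ 2 < 1 ∧ 2 * (τ * M) ^ 2 < a ^ 2 ∧
      τ * M ^ 2 < 2 * (α + γ * a ^ 2 - |β| * a) * a ^ 2 := by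
    refine (ContinuousAt.eventually_lt ?_ ?_ ?_).and ((ContinuousAt.eventually_lt ?_ ?_ ?_).and
      (ContinuousAt.eventually_lt ?_ ?_ ?_)) <;> first | fun_prop | simp <;> positivity
  obtain ⟨τ₀, hτ₀, hsub⟩ := mem_nhdsGT_iff_exists_Ioc_subset.mp (nhdsWithin_le_nhds hsmall)
  refine ⟨τ₀, hτ₀, fun τ hτ hττ₀ Q hrec hQ₀ htr₀ hnorm₀ m => ?_⟩
  obtain ⟨h₁, h₂, h₃⟩ := hsub ⟨hτ, hττ₀⟩
  simp only [frobNorm_eq_norm] at hnorm₀ ⊢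
  induction m with
  | zero => exact ⟨hQ₀, htr₀, hnorm₀⟩
  | succ m ih =>
    obtain ⟨hQ, htr, hnorm⟩ := ih
    rw [hrec m]
    refine ⟨?_, ?_, norm_add_smul_fQ_le hγ.le ha hτ.le h₁.le h₂.le h₃.le hQ htr hnorm⟩
    · rw [transpose_add, transpose_smul, hQ, transpose_fQ hQ]
    · rw [trace_add, trace_smul, htr, trace_fQ htr, smul_zero, add_zero]
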